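/- Reed–Solomon full-length correspondence: for n = q and 1 ≤ k ≤ q, taking α to enumerate all elements of F_q and v = (1,…,1), the code GRS_{k,q}(α,v) equals EGRS_{k,q−1}(β,w) where β enumerates all nonzero inverses (i.e., all of F_q*) and wⱼ = βⱼ^{−(k−1)}. -/

import Mathlib

open Polynomial

/-- The generalized Reed-Solomon code: codewords `(v i * f (α i))_i` for `deg f ≤ k - 1`. -/
def grsCode (F : Type) [Field F] (k n : ℕ) (α v : Fin n → F) : Set (Fin n → F) :=
  {c | ∃ f : F[X], f.degree < (k : WithBot ℕ) ∧ c = fun i => v i * f.eval (α i)}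

/-- The extended generalized Reed-Solomon code: codewords
`(v 1 * f (α 1), …, v n * f (α n), f_{k-1})` for `deg f ≤ k - 1`. -/
def egrsCode (F : Type) [Field F] (k n : ℕ) (α v : Fin n → F) : Set (Fin (n + 1) → F) :=
  {c | ∃ f : F[X], f.degree < (k : WithBot ℕ) ∧
    c = Fin.snoc (fun i => v i * f.eval (α i)) (f.coeff (k - 1))}


/-!
The reflection `g = X ^ (k - 1) * f (1 / X)` is an involution on polynomials of degree `< k`.
It swaps `f 0` with the coefficient of degree `k - 1`, so the value of `f` at `α_q = 0`
becomes the extra coordinate of the extended code, and at every `x ≠ 0` it satisfies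
`f x = x ^ (k - 1) * g x⁻¹`, which is where the weights `w` come from.
-/

namespace Polynomial

variable {R : Type*} [Semiring R]

theorem degree_lt_succ_iff_natDegree_le {f : R[X]} {N : ℕ} :
    f.degree < ((N + 1 : ℕ) : WithBot ℕ) ↔ f.natDegree ≤ N := by
  rw [← mem_degreeLT, degreeLT_succ_eq_degreeLE, mem_degreeLE, natDegree_le_iff_degree_le]

theorem natDegree_reflect_le_of_le {f : R[X]} {N : ℕ} (hf : f.natDegree ≤ N) :
    (reflect N f).natDegree ≤ N :=
  natDegree_reflect_le.trans (max_le le_rfl hf)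

theorem eval_eq_pow_mul_eval_reflect_inv {F : Type*} [Field F] {f : F[X]} {N : ℕ}
    (hf : f.natDegree ≤ N) {x : F} (hx : x ≠ 0) :
    f.eval x = x ^ N * (reflect N f).eval x⁻¹ := by
  let _ := invertibleOfNonzero hx
  rw [mul_comm, ← invOf_eq_inv x]
  exact (eval₂_reflect_mul_pow (RingHom.id F) x N f hf).symm

end Polynomial

open Polynomial

theorem snoc_eval_reflect_eq_eval {F : Type} [Field F] {m N : ℕ} {α : Fin (m + 1) → F}
    (hα : Function.Injective α) (h0 : α (Fin.last m) = 0) {f : F[X]} (hf : f.natDegree ≤ N) :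
    (Fin.snoc (fun j => α j.castSucc ^ N * (reflect N f).eval (α j.castSucc)⁻¹)
      ((reflect N f).coeff N) : Fin (m + 1) → F) = fun i => f.eval (α i) := by
  funext i
  induction i using Fin.lastCases with
  | last =>
    rw [Fin.snoc_last, coeff_reflect, revAt_le le_rfl, Nat.sub_self, h0,
      coeff_zero_eq_eval_zero]
  | cast j =>
    have hj : α j.castSucc ≠ 0 := h0 ▸ hα.ne (Fin.castSucc_lt_last j).ne
    rw [Fin.snoc_castSucc, eval_eq_pow_mul_eval_reflect_inv hf hj]

theorem stmt19_general (F : Type) [Field F] (k m : ℕ)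
    (hk : 1 ≤ k)
    (α : Fin (m + 1) → F) (hα : Function.Bijective α) (h0 : α (Fin.last m) = 0) :
    grsCode F k (m + 1) α (fun _ => 1) =
      egrsCode F k m (fun j => (α (Fin.castSucc j))⁻¹)
        (fun j => ((α (Fin.castSucc j))⁻¹ ^ (k - 1))⁻¹) := by
  obtain ⟨N, rfl⟩ := Nat.exists_eq_add_of_le' hk
  ext c
  simp only [grsCode, egrsCode, Set.mem_ofPred_eq, degree_lt_succ_iff_natDegree_le, one_mul,
    inv_pow, inv_inv, Nat.add_sub_cancel]
  constructor
  · rintro ⟨f, hf, rfl⟩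
    exact ⟨reflect N f, natDegree_reflect_le_of_le hf, (snoc_eval_reflect_eq_eval hα.1 h0 hf).symm⟩
  · rintro ⟨g, hg, rfl⟩
    have hg' := natDegree_reflect_le_of_le hg
    refine ⟨reflect N g, hg', ?_⟩
    rw [← snoc_eval_reflect_eq_eval hα.1 h0 hg', reflect_reflect]

theorem stmt19 (F : Type) [Field F] [Fintype F] (k m : ℕ)
    (hq : Fintype.card F = m + 1) (hk : 1 ≤ k) (hkq : k ≤ m + 1)
    (α : Fin (m + 1) → F) (hα : Function.Bijective α) (h0 : α (Fin.last m) = 0) :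
    grsCode F k (m + 1) α (fun _ => 1) =
      egrsCode F k m (fun j => (α (Fin.castSucc j))⁻¹)
        (fun j => ((α (Fin.castSucc j))⁻¹ ^ (k - 1))⁻¹) :=
  stmt19_general F k m hk α hα h0
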